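/- Let γ ≥ 0 and let f : ℝ → ℝ be measurable with ⟨x⟩^γ f ∈ L²(ℝ). Then ⟨x⟩^γ Q₊(f) ∈ L²(ℝ) and there is a constant C = C(γ), independent of f, with ‖⟨x⟩^γ Q₊(f)‖_{L²} ≤ C ‖⟨x⟩^γ f‖_{L²}. -/

import Mathlib

open MeasureTheory Filter

/-- The Japanese bracket `⟨x⟩ = √(1+x²)`. -/
noncomputable def jp (x : ℝ) : ℝ := Real.sqrt (1 + x ^ 2)

/-- The one-sided exponential convolution `(Q₊ g)(x) = ∫₀^∞ g(x-z) e^{-z} dz`. -/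
noncomputable def Qplus (g : ℝ → ℝ) (x : ℝ) : ℝ :=
  ∫ z in Set.Ioi (0:ℝ), g (x - z) * Real.exp (-z)

/-!
Peetre's inequality `⟨x⟩^γ ≤ 2^{γ/2} ⟨x-z⟩^γ ⟨z⟩^γ` moves the weight inside the integral:
`|⟨x⟩^γ Q₊f(x)|` is bounded by the convolution of `|⟨·⟩^γ f|` with the kernel
`2^{γ/2} ⟨z⟩^γ e^{-z}` on `(0, ∞)`. This kernel is integrable, so Young's inequality
`L¹ * L² ⊆ L²` (Hölder for each `x`, then Tonelli and translation invariance) gives the bound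
with `C = 2^{γ/2} ∫₀^∞ ⟨z⟩^γ e^{-z} dz`.
-/

open Set Asymptotics
open scoped ENNReal

section Convolution

theorem ENNReal.lintegral_mul_rpow_le {α : Type*} [MeasurableSpace α] (ν : Measure α)
    {K G : α → ℝ≥0∞} (hK : AEMeasurable K ν) (hG : AEMeasurable G ν) {p : ℝ} (hp : 1 ≤ p) :
    (∫⁻ z, K z * G z ∂ν) ^ p ≤ (∫⁻ z, K z ∂ν) ^ (p - 1) * ∫⁻ z, K z * G z ^ p ∂ν := by
  have hp0 : 0 < p := by linarith
  have hq : 0 ≤ 1 - p⁻¹ := sub_nonneg.2 (inv_le_one_of_one_le₀ hp)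
  have hsplit : ∀ z, K z ^ (1 - p⁻¹) * (K z * G z ^ p) ^ p⁻¹ = K z * G z := fun z => by
    rw [ENNReal.mul_rpow_of_nonneg _ _ (inv_nonneg.2 hp0.le), ← ENNReal.rpow_mul,
      mul_inv_cancel₀ hp0.ne', ENNReal.rpow_one, ← mul_assoc,
      ← ENNReal.rpow_add_of_nonneg _ _ hq (inv_nonneg.2 hp0.le), sub_add_cancel,
      ENNReal.rpow_one]
  have holder := ENNReal.lintegral_mul_norm_pow_le hK (hK.mul (hG.pow_const p)) hq
    (inv_nonneg.2 hp0.le) (sub_add_cancel 1 p⁻¹)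
  simp only [Pi.mul_apply, hsplit] at holder
  calc (∫⁻ z, K z * G z ∂ν) ^ p
      ≤ ((∫⁻ z, K z ∂ν) ^ (1 - p⁻¹) * (∫⁻ z, K z * G z ^ p ∂ν) ^ p⁻¹) ^ p :=
        ENNReal.rpow_le_rpow holder hp0.le
    _ = (∫⁻ z, K z ∂ν) ^ (p - 1) * ∫⁻ z, K z * G z ^ p ∂ν := by
        rw [ENNReal.mul_rpow_of_nonneg _ _ hp0.le, ← ENNReal.rpow_mul, ← ENNReal.rpow_mul,
          inv_mul_cancel₀ hp0.ne', ENNReal.rpow_one, sub_mul, one_mul,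
          inv_mul_cancel₀ hp0.ne']

variable {G : Type*} [MeasurableSpace G] [AddGroup G] [MeasurableAdd G] [MeasurableSub₂ G]
  (μ ν : Measure G) [μ.IsAddRightInvariant] [SFinite μ] [SFinite ν]
  {K F : G → ℝ≥0∞}

theorem lintegral_rpow_lintegral_mul_sub_le (hK : Measurable K) (hF : Measurable F) {p : ℝ}
    (hp : 1 ≤ p) :
    ∫⁻ x, (∫⁻ z, K z * F (x - z) ∂ν) ^ p ∂μ ≤ (∫⁻ z, K z ∂ν) ^ p * ∫⁻ x, F x ^ p ∂μ := by
  have hKF : Measurable (Function.uncurry fun x z => K z * F (x - z) ^ p) :=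
    (hK.comp measurable_snd).mul ((hF.comp measurable_sub).pow_const p)
  have htrans : ∀ z, ∫⁻ x, K z * F (x - z) ^ p ∂μ = K z * ∫⁻ x, F x ^ p ∂μ := fun z => by
    rw [lintegral_const_mul _ (by fun_prop),
      lintegral_sub_right_eq_self (fun x => F x ^ p) z]
  calc ∫⁻ x, (∫⁻ z, K z * F (x - z) ∂ν) ^ p ∂μ
      ≤ ∫⁻ x, (∫⁻ z, K z ∂ν) ^ (p - 1) * ∫⁻ z, K z * F (x - z) ^ p ∂ν ∂μ :=
        lintegral_mono fun x => ENNReal.lintegral_mul_rpow_le ν hK.aemeasurable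
          (hF.comp (measurable_const.sub measurable_id)).aemeasurable hp
    _ = (∫⁻ z, K z ∂ν) ^ (p - 1) * ∫⁻ z, ∫⁻ x, K z * F (x - z) ^ p ∂μ ∂ν := by
        rw [lintegral_const_mul _ hKF.lintegral_prod_right,
          lintegral_lintegral_swap hKF.aemeasurable]
    _ = (∫⁻ z, K z ∂ν) ^ p * ∫⁻ x, F x ^ p ∂μ := by
        rw [lintegral_congr htrans, lintegral_mul_const _ hK, ← mul_assoc]
        congr 1
        conv_rhs => rw [← sub_add_cancel p 1]
        rw [ENNReal.rpow_add_of_nonneg _ _ (by linarith) zero_le_one, ENNReal.rpow_one]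

theorem eLpNorm_lintegral_mul_sub_le (hK : Measurable K) (hF : Measurable F) {p : ℝ≥0∞}
    (hp1 : 1 ≤ p) (hp : p ≠ ∞) :
    eLpNorm (fun x => ∫⁻ z, K z * F (x - z) ∂ν) p μ ≤ (∫⁻ z, K z ∂ν) * eLpNorm F p μ := by
  have hp0 : p ≠ 0 := (zero_lt_one.trans_le hp1).ne'
  have hpr : 1 ≤ p.toReal := by simpa using ENNReal.toReal_mono hp hp1
  simp only [eLpNorm_eq_lintegral_rpow_enorm_toReal hp0 hp, enorm_eq_self]
  calc (∫⁻ x, (∫⁻ z, K z * F (x - z) ∂ν) ^ p.toReal ∂μ) ^ (1 / p.toReal)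
      ≤ ((∫⁻ z, K z ∂ν) ^ p.toReal * ∫⁻ x, F x ^ p.toReal ∂μ) ^ (1 / p.toReal) :=
        ENNReal.rpow_le_rpow (lintegral_rpow_lintegral_mul_sub_le μ ν hK hF hpr) (by positivity)
    _ = (∫⁻ z, K z ∂ν) * (∫⁻ x, F x ^ p.toReal ∂μ) ^ (1 / p.toReal) := by
        rw [ENNReal.mul_rpow_of_nonneg _ _ (by positivity), ← ENNReal.rpow_mul,
          mul_one_div_cancel (by positivity), ENNReal.rpow_one]

end Convolution

lemma jp_pos (x : ℝ) : 0 < jp x := Real.sqrt_pos.2 (by positivity)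

lemma one_le_jp (x : ℝ) : 1 ≤ jp x :=
  Real.one_le_sqrt.2 (by nlinarith [sq_nonneg x])

lemma jp_rpow_pos (γ x : ℝ) : 0 < jp x ^ γ := Real.rpow_pos_of_pos (jp_pos x) γ

lemma continuous_jp : Continuous jp := by unfold jp; fun_prop

lemma continuous_jp_rpow (γ : ℝ) : Continuous fun x => jp x ^ γ :=
  continuous_jp.rpow_const fun x => Or.inl (jp_pos x).ne'

lemma jp_le_sqrt_two_mul_jp_mul_jp (x z : ℝ) : jp x ≤ √2 * (jp (x - z) * jp z) := by
  rw [jp, jp, jp, ← Real.sqrt_mul (by positivity), ← Real.sqrt_mul (by positivity)]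
  exact Real.sqrt_le_sqrt (by nlinarith [sq_nonneg (x - 2 * z), sq_nonneg ((x - z) * z)])

lemma jp_rpow_le_sqrt_two_rpow_mul {γ : ℝ} (hγ : 0 ≤ γ) (x z : ℝ) :
    jp x ^ γ ≤ √2 ^ γ * (jp (x - z) ^ γ * jp z ^ γ) := by
  rw [← Real.mul_rpow (jp_pos _).le (jp_pos _).le,
    ← Real.mul_rpow (by positivity) (mul_pos (jp_pos _) (jp_pos _)).le]
  exact Real.rpow_le_rpow (jp_pos x).le (jp_le_sqrt_two_mul_jp_mul_jp x z) hγ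

lemma jp_le_two_mul {z : ℝ} (hz : 1 ≤ z) : jp z ≤ 2 * z := by
  rw [jp, Real.sqrt_le_left (by linarith)]
  nlinarith

lemma integrableOn_jp_rpow_mul_exp_neg (γ : ℝ) :
    IntegrableOn (fun z => jp z ^ γ * Real.exp (-z)) (Ioi 0) := by
  have hcont : Continuous fun z => jp z ^ γ * Real.exp (-z) :=
    (continuous_jp_rpow γ).mul (by fun_prop)
  refine integrable_of_isBigO_exp_neg one_half_pos hcont.continuousOn ?_
  have hjp : (fun z => jp z ^ γ) =O[atTop] fun z => z ^ |γ| := by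
    refine IsBigO.of_bound (2 ^ |γ|) ?_
    filter_upwards [eventually_ge_atTop 1] with z hz
    rw [Real.norm_of_nonneg (Real.rpow_nonneg (jp_pos z).le γ),
      Real.norm_of_nonneg (by positivity),
      ← Real.mul_rpow zero_le_two (by linarith)]
    calc jp z ^ γ ≤ jp z ^ |γ| := Real.rpow_le_rpow_of_exponent_le (one_le_jp z) (le_abs_self γ)
      _ ≤ (2 * z) ^ |γ| := Real.rpow_le_rpow (jp_pos z).le (jp_le_two_mul hz) (abs_nonneg γ)
  have hexp : (fun z => Real.exp (1 / 2 * z) * Real.exp (-z)) =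
      fun z => Real.exp (-(1 / 2) * z) := by
    ext z; rw [← Real.exp_add]; ring_nf
  rw [← hexp]
  exact ((hjp.trans (isLittleO_rpow_exp_pos_mul_atTop |γ| one_half_pos).isBigO).mul
    (isBigO_refl _ _))

lemma integral_jp_rpow_mul_exp_neg_pos (γ : ℝ) : 0 < ∫ z in Ioi 0, jp z ^ γ * Real.exp (-z) := by
  have hpos : ∀ z, 0 < jp z ^ γ * Real.exp (-z) := fun z =>
    mul_pos (jp_rpow_pos γ z) (Real.exp_pos _)
  rw [setIntegral_pos_iff_support_of_nonneg_ae (ae_of_all _ fun z => (hpos z).le)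
    (integrableOn_jp_rpow_mul_exp_neg γ)]
  simp [Function.support, (hpos _).ne']

lemma measurable_Qplus {f : ℝ → ℝ} (hf : Measurable f) : Measurable (Qplus f) :=
  (StronglyMeasurable.integral_prod_right' (f := fun p : ℝ × ℝ => f (p.1 - p.2) * Real.exp (-p.2))
    (by fun_prop)).measurable

lemma enorm_jp_rpow_mul_Qplus_le {γ : ℝ} (hγ : 0 ≤ γ) (f : ℝ → ℝ) (x : ℝ) :
    ‖jp x ^ γ * Qplus f x‖ₑ ≤ ∫⁻ z in Ioi 0,
      ENNReal.ofReal (√2 ^ γ * (jp z ^ γ * Real.exp (-z))) * ‖jp (x - z) ^ γ * f (x - z)‖ₑ := by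
  calc ‖jp x ^ γ * Qplus f x‖ₑ
      ≤ ‖jp x ^ γ‖ₑ * ∫⁻ z in Ioi 0, ‖f (x - z) * Real.exp (-z)‖ₑ := by
        rw [enorm_mul]; gcongr; exact enorm_integral_le_lintegral_enorm _
    _ = ∫⁻ z in Ioi 0, ‖jp x ^ γ * (f (x - z) * Real.exp (-z))‖ₑ := by
        rw [← lintegral_const_mul' _ _ enorm_ne_top]; simp only [enorm_mul]
    _ ≤ _ := by
        refine lintegral_mono fun z => ?_
        rw [Real.enorm_eq_ofReal_abs, Real.enorm_eq_ofReal_abs, ← ENNReal.ofReal_mul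
          (by have := jp_rpow_pos γ z; positivity)]
        refine ENNReal.ofReal_le_ofReal ?_
        simp only [abs_mul, abs_of_pos (Real.exp_pos _), abs_of_pos (jp_rpow_pos γ _)]
        calc jp x ^ γ * (|f (x - z)| * Real.exp (-z))
            ≤ √2 ^ γ * (jp (x - z) ^ γ * jp z ^ γ) * (|f (x - z)| * Real.exp (-z)) :=
              mul_le_mul_of_nonneg_right (jp_rpow_le_sqrt_two_rpow_mul hγ x z) (by positivity)
          _ = _ := by ring

/-- For `γ ≥ 0`, if `⟨x⟩^γ f ∈ L²` then `⟨x⟩^γ Q₊(f) ∈ L²`, with a bound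
`‖⟨x⟩^γ Q₊(f)‖_{L²} ≤ C(γ) ‖⟨x⟩^γ f‖_{L²}` uniform in `f`. -/
theorem stmt4 (γ : ℝ) (hγ : 0 ≤ γ) :
    ∃ C > (0:ℝ), ∀ f : ℝ → ℝ, Measurable f →
      MemLp (fun x => jp x ^ γ * f x) 2 volume →
      MemLp (fun x => jp x ^ γ * Qplus f x) 2 volume ∧
      eLpNorm (fun x => jp x ^ γ * Qplus f x) 2 volume ≤
        ENNReal.ofReal C * eLpNorm (fun x => jp x ^ γ * f x) 2 volume := by
  set I := ∫ z in Ioi 0, jp z ^ γ * Real.exp (-z)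
  set K : ℝ → ℝ≥0∞ := fun z => ENNReal.ofReal (√2 ^ γ * (jp z ^ γ * Real.exp (-z)))
  have hK : Measurable K :=
    (continuous_const.mul ((continuous_jp_rpow γ).mul (by fun_prop))).measurable.ennreal_ofReal
  have hKI : ∫⁻ z in Ioi 0, K z = ENNReal.ofReal (√2 ^ γ * I) := by
    rw [← integral_const_mul]
    exact (ofReal_integral_eq_lintegral_ofReal
      ((integrableOn_jp_rpow_mul_exp_neg γ).const_mul _)
      (ae_of_all _ fun z => by have := jp_rpow_pos γ z; positivity)).symm
  refine ⟨√2 ^ γ * I, mul_pos (by positivity) (integral_jp_rpow_mul_exp_neg_pos γ),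
    fun f hf hfw => ?_⟩
  have hbound : eLpNorm (fun x => jp x ^ γ * Qplus f x) 2 volume ≤
      ENNReal.ofReal (√2 ^ γ * I) * eLpNorm (fun x => jp x ^ γ * f x) 2 volume :=
    calc eLpNorm (fun x => jp x ^ γ * Qplus f x) 2 volume
        ≤ eLpNorm (fun x => ∫⁻ z in Ioi 0, K z * ‖jp (x - z) ^ γ * f (x - z)‖ₑ) 2 volume :=
          eLpNorm_mono_enorm fun x => enorm_jp_rpow_mul_Qplus_le hγ f x
      _ ≤ (∫⁻ z in Ioi 0, K z) * eLpNorm (fun x => ‖jp x ^ γ * f x‖ₑ) 2 volume :=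
          eLpNorm_lintegral_mul_sub_le volume _ hK ((continuous_jp_rpow γ).measurable.mul hf).enorm
            one_le_two ENNReal.ofNat_ne_top
      _ = _ := by rw [eLpNorm_enorm, hKI]
  have hmeas : Measurable fun x => jp x ^ γ * Qplus f x :=
    (continuous_jp_rpow γ).measurable.mul (measurable_Qplus hf)
  exact ⟨⟨hmeas.aestronglyMeasurable,
    hbound.trans_lt (ENNReal.mul_lt_top ENNReal.ofReal_lt_top hfw.eLpNorm_lt_top)⟩, hbound⟩
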